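/- arXiv:2303.02496 — 2 statements merged into one kernel-verified Lean document; each statement's English description precedes it below -/
import Mathlib

section
/- Let s ∈ (0,1), α ∈ (0,s), r > 0, and let ν ∈ ℝⁿ be a unit vector. For each integer l ≥ 0 and y ∈ ℝⁿ, ∫_{B_{2^{-l} r}(y) \ B_{2^{-l-1} r}(y)} 1_{{|(x-y)·ν| ≤ 2 r 2^{-l(1+α)}}} |x-y|^{-(n+s)} dx ≤ C r^{-s} 2^{l(s-α)}, where C depends only on n, s. -/
/-!
On the annulus the integrand is at most `(2^{-l-1} r)^{-(n+s)}`. In an orthonormal frame whose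
first vector is `ν`, the annulus cut by the slab lies in a box with side `2 · 2r 2^{-l(1+α)}`
along `ν` and `2 · 2^{-l} r` in the other `n - 1` directions. Multiplying, the powers of `2`
combine exactly into `2^{2n+1+s} r^{-s} 2^{l(s-α)}`.
-/

open Real MeasureTheory ENNReal Metric Module

theorem setLIntegral_ofReal_rpow_norm_sub_le {E : Type*} [SeminormedAddCommGroup E]
    [MeasurableSpace E] (μ : Measure E) {p ρ : ℝ} (hp : p ≤ 0) (hρ : 0 < ρ) {s : Set E} {y : E}
    (hs : s ⊆ (ball y ρ)ᶜ) :
    ∫⁻ x in s, ENNReal.ofReal (‖x - y‖ ^ p) ∂μ ≤ ENNReal.ofReal (ρ ^ p) * μ s :=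
  (setLIntegral_mono measurable_const fun x hx ↦ ENNReal.ofReal_le_ofReal <|
    rpow_le_rpow_of_nonpos hρ (by simpa [dist_eq_norm] using hs hx) hp).trans_eq
    (setLIntegral_const _ _)

theorem EuclideanSpace.volume_abs_apply_le {ι : Type*} [Fintype ι] (a : ι → ℝ) :
    volume {w : EuclideanSpace ℝ ι | ∀ i, |w i| ≤ a i} = ∏ i, ENNReal.ofReal (2 * a i) := by
  have hbox : {w : EuclideanSpace ℝ ι | ∀ i, |w i| ≤ a i} =
      WithLp.ofLp ⁻¹' Set.univ.pi fun i ↦ Set.Icc (-a i) (a i) := by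
    ext w
    simp only [Set.mem_ofPred_eq, Set.mem_preimage, Set.mem_univ_pi, Set.mem_Icc, abs_le]
  rw [hbox, (PiLp.volume_preserving_ofLp ι).measure_preimage
    (MeasurableSet.univ_pi fun _ ↦ measurableSet_Icc).nullMeasurableSet, volume_pi_pi]
  simp only [Real.volume_Icc, sub_neg_eq_add, two_mul]

theorem exists_orthonormalBasis_zero_eq {F : Type*} [NormedAddCommGroup F]
    [InnerProductSpace ℝ F] [FiniteDimensional ℝ F] {k : ℕ} (hF : finrank ℝ F = k + 1) {ν : F}
    (hν : ‖ν‖ = 1) : ∃ b : OrthonormalBasis (Fin (k + 1)) ℝ F, b 0 = ν := by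
  have hon : Orthonormal ℝ (({0} : Set (Fin (k + 1))).domRestrict fun _ ↦ ν) :=
    ⟨fun _ ↦ hν, fun i j hij ↦ (hij (Subsingleton.elim i j)).elim⟩
  obtain ⟨b, hb⟩ := hon.exists_orthonormalBasis_extension_of_card_eq (by simpa using hF)
  exact ⟨b, hb 0 rfl⟩

theorem volume_ball_inter_slab_le {F : Type*} [NormedAddCommGroup F] [InnerProductSpace ℝ F]
    [FiniteDimensional ℝ F] [MeasurableSpace F] [BorelSpace F] {k : ℕ}
    (hF : finrank ℝ F = k + 1) {ν : F} (hν : ‖ν‖ = 1) (y : F) (R δ : ℝ) :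
    volume (ball y R ∩ {x | |inner ℝ (x - y) ν| ≤ δ}) ≤
      ENNReal.ofReal (2 * δ) * ENNReal.ofReal (2 * R) ^ k := by
  obtain ⟨b, hb⟩ := exists_orthonormalBasis_zero_eq hF hν
  set box : Set (EuclideanSpace ℝ (Fin (k + 1))) :=
    {w | ∀ i, |w i| ≤ (Fin.cons δ fun _ ↦ R : Fin (k + 1) → ℝ) i}
  have hbox : MeasurableSet box := by
    simp only [box, Set.ofPred_forall]
    exact (isClosed_iInter fun i ↦ isClosed_le (by fun_prop) continuous_const).measurableSet
  have hsub : ball y R ∩ {x | |inner ℝ (x - y) ν| ≤ δ} ⊆ (fun x ↦ b.repr (x - y)) ⁻¹' box := by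
    rintro x ⟨hxR, hxδ⟩ i
    cases i using Fin.cases with
    | zero =>
      change |b.repr (x - y) 0| ≤ δ
      rwa [b.repr_apply_apply, hb, real_inner_comm]
    | succ j =>
      have hcoord := PiLp.norm_apply_le (b.repr (x - y)) j.succ
      rw [mem_ball, dist_eq_norm] at hxR
      simp only [Real.norm_eq_abs, LinearIsometryEquiv.norm_map] at hcoord
      simpa using hcoord.trans hxR.le
  calc volume (ball y R ∩ {x | |inner ℝ (x - y) ν| ≤ δ})
      ≤ volume ((fun x ↦ b.repr (x - y)) ⁻¹' box) := measure_mono hsub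
    _ = volume box := (b.measurePreserving_repr.comp
        (measurePreserving_sub_right volume y)).measure_preimage hbox.nullMeasurableSet
    _ = ENNReal.ofReal (2 * δ) * ENNReal.ofReal (2 * R) ^ k := by
        simp [box, EuclideanSpace.volume_abs_apply_le, Fin.prod_univ_succ]

theorem setLIntegral_annulus_inter_slab_le {F : Type*} [NormedAddCommGroup F]
    [InnerProductSpace ℝ F] [FiniteDimensional ℝ F] [MeasurableSpace F] [BorelSpace F] {k : ℕ}
    (hF : finrank ℝ F = k + 1) {ν : F} (hν : ‖ν‖ = 1) (y : F) {p ρ R δ : ℝ} (hp : p ≤ 0)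
    (hρ : 0 < ρ) (hR : 0 ≤ R) (hδ : 0 ≤ δ) :
    ∫⁻ x in (ball y R \ ball y ρ) ∩ {x | |inner ℝ (x - y) ν| ≤ δ}, ENNReal.ofReal (‖x - y‖ ^ p) ≤
      ENNReal.ofReal (ρ ^ p * (2 * δ * (2 * R) ^ k)) :=
  calc _ ≤ ENNReal.ofReal (ρ ^ p) *
          volume ((ball y R \ ball y ρ) ∩ {x | |inner ℝ (x - y) ν| ≤ δ}) :=
        setLIntegral_ofReal_rpow_norm_sub_le _ hp hρ
          (Set.inter_subset_left.trans (Set.sdiff_subset_compl _ _))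
    _ ≤ ENNReal.ofReal (ρ ^ p) * (ENNReal.ofReal (2 * δ) * ENNReal.ofReal (2 * R) ^ k) := by
        gcongr _ * ?_
        exact (measure_mono (Set.inter_subset_inter_left _ Set.sdiff_subset)).trans
          (volume_ball_inter_slab_le hF hν y R δ)
    _ = _ := by
        rw [← ENNReal.ofReal_pow (by positivity), ← ENNReal.ofReal_mul (by positivity),
          ← ENNReal.ofReal_mul (by positivity)]

theorem dyadic_scaling_eq (k : ℕ) (L s α : ℝ) {r : ℝ} (hr : 0 < r) :
    ((2:ℝ) ^ (-L - 1) * r) ^ (-(((k + 1 : ℕ) : ℝ) + s)) *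
      (2 * (2 * r * (2:ℝ) ^ (-L * (1 + α))) * (2 * ((2:ℝ) ^ (-L) * r)) ^ k) =
      (2:ℝ) ^ (2 * ((k + 1 : ℕ) : ℝ) + 1 + s) * r ^ (-s) * (2:ℝ) ^ (L * (s - α)) := by
  refine Real.log_injOn_pos (Set.mem_Ioi.2 (by positivity)) (Set.mem_Ioi.2 (by positivity)) ?_
  simp (disch := positivity) only [Real.log_mul, Real.log_rpow, Real.log_pow]
  push_cast
  ring

/-- Dyadic annulus estimate: the integral of `|x-y|^{-(n+s)}` over the annulus
`B_{2^{-l}r}(y) \ B_{2^{-l-1}r}(y)` intersected with the slab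
`{|(x-y)·ν| ≤ 2r·2^{-l(1+α)}}` is at most `C r^{-s} 2^{l(s-α)}`, `C = C(n,s)`. -/
theorem dyadic_annulus_estimate (n : ℕ) (s : ℝ) (hs : s ∈ Set.Ioo (0:ℝ) 1) :
    ∃ C : ℝ, 0 < C ∧
      ∀ (α r : ℝ), α ∈ Set.Ioo 0 s → 0 < r →
      ∀ ν : EuclideanSpace ℝ (Fin n), ‖ν‖ = 1 →
      ∀ (l : ℕ) (y : EuclideanSpace ℝ (Fin n)),
        (∫⁻ x in (Metric.ball y ((2:ℝ) ^ (-(l:ℝ)) * r) \ Metric.ball y ((2:ℝ) ^ (-(l:ℝ)-1) * r))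
            ∩ {x : EuclideanSpace ℝ (Fin n) | |inner ℝ (x - y) ν| ≤ 2 * r * (2:ℝ) ^ (-(l:ℝ)*(1+α))},
          ENNReal.ofReal (‖x - y‖ ^ (-((n : ℝ) + s))))
        ≤ ENNReal.ofReal (C * r ^ (-s) * (2:ℝ) ^ ((l:ℝ)*(s-α))) := by
  refine ⟨2 ^ (2 * (n : ℝ) + 1 + s), by positivity, ?_⟩
  rintro α r - hr ν hν l y
  obtain ⟨k, rfl⟩ : ∃ k, n = k + 1 :=
    Nat.exists_eq_succ_of_ne_zero (by rintro rfl; simp [Subsingleton.elim ν 0] at hν)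
  have hp : -(((k + 1 : ℕ) : ℝ) + s) ≤ 0 := by linarith [hs.1, (k + 1 : ℕ).cast_nonneg (α := ℝ)]
  rw [← dyadic_scaling_eq k l s α hr]
  exact setLIntegral_annulus_inter_slab_le finrank_euclideanSpace_fin hν y hp (by positivity)
    (by positivity) (by positivity)
end

section
/- Let P ⊂ ℝⁿ be the subgraph P = { (x', xⁿ) : xⁿ < ψ(x') } of a C² function ψ : ℝ^{n-1} → ℝ with ψ(0) = 0, ∇ψ(0) = 0, and ‖D²ψ‖ ≤ a. Let K : ℝⁿ × ℝⁿ → [0,∞) be symmetric about the origin in the sense K(z) = K(-z), with K(z) ≤ Λ|z|^{-(n+s)} for s ∈ (0,1). Then for δ ∈ (0,1], | ∫_{B_δ(0)} (χ_P(x) - χ_{𝒞P}(x)) K(x) dx | ≤ C a δ^{1-s} (with the integral understood as a principal value / limit over B_δ \ B_ε), where C depends only on n, s, Λ. -/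
open Real MeasureTheory Filter Metric Set Module
open scoped ENNReal

/-!
Pairing `z` with `-z` and using `K (-z) = K z`, the integrand `(χ_P - χ_{𝒞P}) K` cancels
unless `z` and `-z` lie on the same side of the graph of `ψ`. As `|ψ x'| ≤ a |x'|²` (Taylor),
this confines `z = (z', zⁿ)` to the slab `|zⁿ| ≤ a |z'|²`, where `K z ≤ Λ |z'|^{-(n+s)}`.
Integrating first in `zⁿ` leaves `4 Λ a ∫_{|z'| < δ} |z'|^{2-n-s} dz'`, which in polar
coordinates on `ℝ^{n-1}` is `C a δ^{1-s}`, uniformly in the truncation `ε`.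
-/

section Taylor

variable {E F : Type*} [NormedAddCommGroup E] [NormedSpace ℝ E] [NormedAddCommGroup F]
  [NormedSpace ℝ F]

theorem norm_le_mul_norm_sq_of_norm_iteratedFDeriv_two_le {f : E → F} {a : ℝ}
    (hf : ContDiff ℝ 2 f) (h0 : f 0 = 0) (hf0 : fderiv ℝ f 0 = 0)
    (hD2 : ∀ x, ‖iteratedFDeriv ℝ 2 f x‖ ≤ a) (y : E) : ‖f y‖ ≤ a * ‖y‖ ^ 2 := by
  have ha : 0 ≤ a := (norm_nonneg _).trans (hD2 0)
  have hD : ∀ x, ‖fderiv ℝ (fderiv ℝ f) x‖ ≤ a := fun x => by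
    rw [← norm_iteratedFDeriv_one, norm_iteratedFDeriv_fderiv]
    exact hD2 x
  have hDf : ∀ x, ‖fderiv ℝ f x‖ ≤ a * ‖x‖ := fun x => by
    simpa [hf0] using convex_univ.norm_image_sub_le_of_norm_fderiv_le
      (fun z _ => (hf.fderiv_right (m := 1) le_rfl).differentiable one_ne_zero z)
      (fun z _ => hD z) (mem_univ 0) (mem_univ x)
  have := (convex_closedBall (0 : E) ‖y‖).norm_image_sub_le_of_norm_fderiv_le
    (fun z _ => hf.differentiable two_ne_zero z)
    (fun z hz => (hDf z).trans (mul_le_mul_of_nonneg_left (mem_closedBall_zero_iff.mp hz) ha))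
    (mem_closedBall_self (norm_nonneg y)) (mem_closedBall_zero_iff.mpr le_rfl)
  simpa [h0, sq, mul_assoc] using this

end Taylor

section Symmetrization

variable {G E : Type*} [MeasurableSpace G] [AddGroup G] [MeasurableNeg G]
  [NormedAddCommGroup E] [NormedSpace ℝ E] {μ : Measure G} [μ.IsNegInvariant] {A : Set G}

theorem setIntegral_comp_neg_of_neg_eq (hA : -A = A) (f : G → E) :
    ∫ x in A, f (-x) ∂μ = ∫ x in A, f x ∂μ := by
  have := (Measure.measurePreserving_neg μ).setIntegral_preimage_emb
    (MeasurableEquiv.neg G).measurableEmbedding f A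
  change ∫ x in -A, f (-x) ∂μ = _ at this
  rwa [hA] at this

theorem two_mul_enorm_setIntegral_le_of_neg_eq (hA : -A = A) (f : G → E) :
    2 * ‖∫ x in A, f x ∂μ‖ₑ ≤ ∫⁻ x in A, ‖f x + f (-x)‖ₑ ∂μ := by
  by_cases hf : IntegrableOn f A μ
  · have hf' : IntegrableOn (fun x => f (-x)) A μ := by simpa [hA] using hf.comp_neg
    calc 2 * ‖∫ x in A, f x ∂μ‖ₑ = ‖∫ x in A, (f x + f (-x)) ∂μ‖ₑ := by
          have h2 : ‖(2 : ℝ)‖ₑ = 2 := by simpa using Real.enorm_natCast 2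
          rw [integral_add hf hf', setIntegral_comp_neg_of_neg_eq hA, ← two_smul ℝ, enorm_smul,
            h2]
      _ ≤ _ := enorm_integral_le_lintegral_enorm _
  · simp [integral_undef hf]

end Symmetrization

section Radial

variable {E : Type*} [NormedAddCommGroup E] [NormedSpace ℝ E] [FiniteDimensional ℝ E]
  [MeasurableSpace E] [BorelSpace E] (μ : Measure E) [μ.IsAddHaarMeasure]

theorem setIntegral_ball_norm_rpow [Nontrivial E] {q δ : ℝ} (hq : -(finrank ℝ E : ℝ) < q)
    (hδ : 0 < δ) :
    ∫ x in ball 0 δ, ‖x‖ ^ q ∂μ =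
      finrank ℝ E * μ.real (ball 0 1) * (δ ^ (finrank ℝ E + q) / (finrank ℝ E + q)) := by
  set d := finrank ℝ E
  have hd : 1 ≤ d := finrank_pos
  have hr : -1 < (d : ℝ) - 1 + q := by linarith
  have hpow : ∀ y ∈ Ioi (0 : ℝ), y ^ (d - 1) • (Iio δ).indicator (· ^ q) y =
      (Iio δ).indicator (· ^ ((d : ℝ) - 1 + q)) y := fun y (hy : 0 < y) => by
    by_cases hyδ : y < δ
    · simp [indicator_of_mem, hyδ, rpow_add hy, ← rpow_natCast, Nat.cast_sub hd]
    · simp [hyδ]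
  calc ∫ x in ball 0 δ, ‖x‖ ^ q ∂μ
        = ∫ x, (Iio δ).indicator (· ^ q) ‖x‖ ∂μ := by
        rw [← integral_indicator measurableSet_ball]
        congr with x
        by_cases hx : ‖x‖ < δ <;> simp [hx]
    _ = d • μ.real (ball 0 1) •
          ∫ y in Ioi 0, (Iio δ).indicator (· ^ ((d : ℝ) - 1 + q)) y := by
        rw [integral_fun_norm_addHaar μ, setIntegral_congr_fun measurableSet_Ioi hpow]
    _ = d * μ.real (ball 0 1) * (δ ^ (d + q) / (d + q)) := by
        rw [setIntegral_indicator measurableSet_Iio, Ioi_inter_Iio,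
          ← integral_Ioc_eq_integral_Ioo, ← intervalIntegral.integral_of_le hδ.le,
          integral_rpow (Or.inl hr), zero_rpow (by linarith), sub_zero, nsmul_eq_mul, smul_eq_mul, mul_assoc]
        ring_nf

theorem lintegral_ball_norm_rpow {q δ : ℝ} (hq : -(finrank ℝ E : ℝ) < q) (hδ : 0 < δ) :
    ∫⁻ x in ball 0 δ, ENNReal.ofReal (‖x‖ ^ q) ∂μ =
      ENNReal.ofReal
        (finrank ℝ E * μ.real (ball 0 1) * (δ ^ (finrank ℝ E + q) / (finrank ℝ E + q))) := by
  rcases subsingleton_or_nontrivial E with hE | hE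
  · have hd : finrank ℝ E = 0 := finrank_zero_of_subsingleton
    have hq0 : q ≠ 0 := by rw [hd] at hq; exact ne_of_gt (by simpa using hq)
    simp [hd, Subsingleton.elim _ (0 : E), zero_rpow hq0]
  have hint : IntegrableOn (fun x : E => ‖x‖ ^ q) (ball 0 δ) μ := by
    refine (integrableOn_fun_norm_addHaar μ (f := fun r : ℝ => r ^ q)).mpr
      (((intervalIntegral.integrableOn_Ioo_rpow_iff hδ).mpr
        (?_ : -1 < (finrank ℝ E : ℝ) - 1 + q)).congr_fun (fun y (hy : 0 < y ∧ y < δ) => ?_)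
        measurableSet_Ioo)
    · linarith
    · simp [rpow_add hy.1, ← rpow_natCast, Nat.cast_sub (finrank_pos (R := ℝ) (M := E))]
  rw [← ofReal_integral_eq_lintegral_ofReal hint (.of_forall fun x => by positivity),
    setIntegral_ball_norm_rpow μ hq hδ]

end Radial

section Subgraph

variable {α : Type*}

noncomputable def signIndicator (P : Set α) (x : α) : ℝ :=
  P.indicator (fun _ => 1) x - Pᶜ.indicator (fun _ => 1) x

theorem signIndicator_of_mem {P : Set α} {x : α} (h : x ∈ P) :
    signIndicator P x = 1 := by
  simp [signIndicator, h]

theorem signIndicator_of_notMem {P : Set α} {x : α} (h : x ∉ P) :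
    signIndicator P x = -1 := by
  simp [signIndicator, h]

theorem abs_signIndicator_add_le (P : Set α) (x y : α) :
    |signIndicator P x + signIndicator P y| ≤ 2 := by
  by_cases hx : x ∈ P <;> by_cases hy : y ∈ P <;>
    simp [signIndicator_of_mem, signIndicator_of_notMem, hx, hy] <;> norm_num

variable {E : Type*} [NormedAddCommGroup E]

def subgraph (ψ : E → ℝ) : Set (E × ℝ) := {z | z.2 < ψ z.1}

theorem signIndicator_subgraph_add_neg_eq_zero {ψ : E → ℝ} {a : ℝ}
    (hψ : ∀ y, |ψ y| ≤ a * ‖y‖ ^ 2) {z : E × ℝ} (hz : a * ‖z.1‖ ^ 2 < |z.2|) :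
    signIndicator (subgraph ψ) z + signIndicator (subgraph ψ) (-z) = 0 := by
  have h₁ := abs_le.mp (hψ z.1)
  have h₂ := abs_le.mp (hψ (-z.1))
  rw [norm_neg] at h₂
  rcases lt_abs.mp hz with hz | hz
  · rw [signIndicator_of_notMem (by simp [subgraph]; linarith),
      signIndicator_of_mem (by simp [subgraph]; linarith)]
    ring
  · rw [signIndicator_of_mem (by simp [subgraph]; linarith),
      signIndicator_of_notMem (by simp [subgraph]; linarith)]
    ring

theorem enorm_signIndicator_subgraph_mul_add_neg_le {ψ : E → ℝ} {K : E × ℝ → ℝ}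
    {a Λ p ε δ : ℝ} (hψ : ∀ y, |ψ y| ≤ a * ‖y‖ ^ 2) (hK0 : ∀ z, 0 ≤ K z)
    (hKsym : ∀ z, K z = K (-z)) (hKbd : ∀ z, K z ≤ Λ * √(‖z.1‖ ^ 2 + z.2 ^ 2) ^ (-p))
    (hΛ : 0 ≤ Λ) (hp : 0 ≤ p) (hε : 0 < ε) {z : E × ℝ}
    (hz : ε ≤ √(‖z.1‖ ^ 2 + z.2 ^ 2) ∧ √(‖z.1‖ ^ 2 + z.2 ^ 2) < δ) :
    ‖signIndicator (subgraph ψ) z * K z + signIndicator (subgraph ψ) (-z) * K (-z)‖ₑ ≤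
      {z : E × ℝ | |z.2| ≤ a * ‖z.1‖ ^ 2}.indicator
        (fun z => (ball 0 δ).indicator (fun y => ENNReal.ofReal (2 * Λ * ‖y‖ ^ (-p))) z.1) z := by
  rw [← hKsym z, ← add_mul]
  by_cases hband : |z.2| ≤ a * ‖z.1‖ ^ 2
  · have hfst : ‖z.1‖ ≤ √(‖z.1‖ ^ 2 + z.2 ^ 2) :=
      Real.le_sqrt_of_sq_le (le_add_of_nonneg_right (sq_nonneg _))
    have hfst_pos : 0 < ‖z.1‖ := by
      refine (norm_nonneg _).lt_of_ne fun h => ?_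
      rw [← h] at hband hz
      have : z.2 = 0 := by simpa using hband
      simp [this] at hz
      linarith
    rw [indicator_of_mem (show z ∈ {z : E × ℝ | |z.2| ≤ a * ‖z.1‖ ^ 2} from hband),
      indicator_of_mem (mem_ball_zero_iff.mpr (hfst.trans_lt hz.2)), enorm_eq_ofReal_abs,
      abs_mul, abs_of_nonneg (hK0 z), mul_assoc]
    refine ENNReal.ofReal_le_ofReal (mul_le_mul (abs_signIndicator_add_le _ _ _)
      ((hKbd z).trans ?_) (hK0 z) zero_le_two)
    exact mul_le_mul_of_nonneg_left
      (rpow_le_rpow_of_nonpos hfst_pos hfst (neg_nonpos.mpr hp)) hΛ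
  · rw [signIndicator_subgraph_add_neg_eq_zero hψ (not_le.mp hband)]
    simp

theorem lintegral_indicator_abs_le_comp_fst {X : Type*} [MeasurableSpace X] {μ : Measure X}
    {h : X → ℝ} (hh : Measurable h) {g : X → ℝ≥0∞} (hg : Measurable g) :
    ∫⁻ z, {z : X × ℝ | |z.2| ≤ h z.1}.indicator (fun z => g z.1) z ∂μ.prod volume =
      ∫⁻ y, g y * ENNReal.ofReal (2 * h y) ∂μ := by
  have hset : MeasurableSet {z : X × ℝ | |z.2| ≤ h z.1} :=
    measurableSet_le measurable_snd.abs (hh.comp measurable_fst)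
  rw [lintegral_prod _ (by exact ((hg.comp measurable_fst).indicator hset).aemeasurable)]
  refine lintegral_congr fun y => ?_
  have hslice :
      (fun t : ℝ => {z : X × ℝ | |z.2| ≤ h z.1}.indicator (fun z => g z.1) (y, t)) =
      (Icc (-h y) (h y)).indicator fun _ => g y := by
    ext t
    simp [indicator, abs_le]
  rw [hslice, lintegral_indicator_const measurableSet_Icc, Real.volume_Icc, two_mul,
    sub_neg_eq_add]

end Subgraph

section Truncated

variable {E : Type*} [NormedAddCommGroup E] [NormedSpace ℝ E] [FiniteDimensional ℝ E]
  [MeasurableSpace E] [BorelSpace E] (μ : Measure E) [μ.IsAddHaarMeasure]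

theorem lintegral_indicator_abs_le_sq_mul_rpow_neg {d : ℕ} (hd : finrank ℝ E = d)
    {a s Λ δ : ℝ} (hs : s ∈ Ioo 0 1) (hΛ : 0 ≤ Λ) (ha : 0 ≤ a) (hδ : 0 < δ) :
    ∫⁻ z, {z : E × ℝ | |z.2| ≤ a * ‖z.1‖ ^ 2}.indicator (fun z => (ball 0 δ).indicator
        (fun y => ENNReal.ofReal (2 * Λ * ‖y‖ ^ (-((d : ℝ) + 1 + s)))) z.1) z
        ∂μ.prod (volume : Measure ℝ) =
      ENNReal.ofReal (4 * Λ * a * (d * μ.real (ball 0 1) * (δ ^ (1 - s) / (1 - s)))) := by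
  obtain ⟨hs0, hs1⟩ := hs
  set p : ℝ := d + 1 + s
  have hq : -p + ((2 : ℕ) : ℝ) ≠ 0 := by
    rcases d.eq_zero_or_pos with rfl | h
    · norm_num [p]; linarith
    · have : (1 : ℝ) ≤ d := by exact_mod_cast h
      norm_num [p]; linarith
  have hslice : ∀ y : E,
      (ball 0 δ).indicator (fun y => ENNReal.ofReal (2 * Λ * ‖y‖ ^ (-p))) y *
        ENNReal.ofReal (2 * (a * ‖y‖ ^ 2)) =
      (ball 0 δ).indicator
        (fun y => ENNReal.ofReal (4 * Λ * a) * ENNReal.ofReal (‖y‖ ^ (1 - d - s))) y := by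
    intro y
    rw [← indicator_mul_left (ball (0 : E) δ) _ fun y => ENNReal.ofReal (2 * (a * ‖y‖ ^ 2))]
    refine congrFun (indicator_congr fun y _ => ?_) y
    rw [← ENNReal.ofReal_mul (by positivity), ← ENNReal.ofReal_mul (by positivity),
      show (1 : ℝ) - d - s = -p + (2 : ℕ) by push_cast [p]; ring, rpow_add' (norm_nonneg y) hq,
      rpow_natCast]
    ring_nf
  rw [lintegral_indicator_abs_le_comp_fst (h := fun y => a * ‖y‖ ^ 2) (by fun_prop)
      ((by fun_prop : Measurable _).indicator measurableSet_ball),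
    lintegral_congr hslice, lintegral_indicator measurableSet_ball,
    lintegral_const_mul' _ _ ENNReal.ofReal_ne_top,
    lintegral_ball_norm_rpow μ (by rw [hd]; linarith) hδ, hd,
    show (d : ℝ) + (1 - d - s) = 1 - s by ring, ← ENNReal.ofReal_mul (by positivity)]

theorem abs_setIntegral_signIndicator_subgraph_mul_le {d : ℕ} (hd : finrank ℝ E = d)
    {ψ : E → ℝ} {K : E × ℝ → ℝ} {a s Λ ε δ : ℝ} (hψ : ∀ y, |ψ y| ≤ a * ‖y‖ ^ 2)
    (hK0 : ∀ z, 0 ≤ K z) (hKsym : ∀ z, K z = K (-z))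
    (hKbd : ∀ z, K z ≤ Λ * √(‖z.1‖ ^ 2 + z.2 ^ 2) ^ (-((d : ℝ) + 1 + s)))
    (hs : s ∈ Ioo 0 1) (hΛ : 0 ≤ Λ) (ha : 0 ≤ a) (hε : 0 < ε) (hδ : 0 < δ) :
    |∫ z in {z : E × ℝ | ε ≤ √(‖z.1‖ ^ 2 + z.2 ^ 2) ∧ √(‖z.1‖ ^ 2 + z.2 ^ 2) < δ},
        signIndicator (subgraph ψ) z * K z ∂μ.prod (volume : Measure ℝ)| ≤
      2 * Λ * (d * μ.real (ball 0 1) / (1 - s)) * a * δ ^ (1 - s) := by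
  set A := {z : E × ℝ | ε ≤ √(‖z.1‖ ^ 2 + z.2 ^ 2) ∧ √(‖z.1‖ ^ 2 + z.2 ^ 2) < δ}
  set f := fun z => signIndicator (subgraph ψ) z * K z
  have hρ : Continuous fun z : E × ℝ => √(‖z.1‖ ^ 2 + z.2 ^ 2) := by fun_prop
  have hA : MeasurableSet A :=
    (measurableSet_le measurable_const hρ.measurable).inter
      (measurableSet_lt hρ.measurable measurable_const)
  have hAneg : -A = A := by ext z; simp [A]
  have := Measure.IsAddHaarMeasure.isNegInvariant_of_regular (μ.prod (volume : Measure ℝ))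
  have key : 2 * ‖∫ z in A, f z ∂μ.prod (volume : Measure ℝ)‖ₑ ≤
      ENNReal.ofReal (4 * Λ * a * (d * μ.real (ball 0 1) * (δ ^ (1 - s) / (1 - s)))) :=
    calc 2 * ‖∫ z in A, f z ∂μ.prod (volume : Measure ℝ)‖ₑ
        ≤ ∫⁻ z in A, ‖f z + f (-z)‖ₑ ∂μ.prod (volume : Measure ℝ) :=
          two_mul_enorm_setIntegral_le_of_neg_eq hAneg f
      _ ≤ ∫⁻ z in A, _ ∂μ.prod (volume : Measure ℝ) :=
          setLIntegral_mono' hA fun z hz => enorm_signIndicator_subgraph_mul_add_neg_le hψ hK0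
            hKsym hKbd hΛ (by linarith [hs.1, (d.cast_nonneg : (0 : ℝ) ≤ d)]) hε hz
      _ ≤ _ := setLIntegral_le_lintegral _ _
      _ = _ := lintegral_indicator_abs_le_sq_mul_rpow_neg μ hd hs hΛ ha hδ
  rw [enorm_eq_ofReal_abs, ← ENNReal.ofReal_ofNat, ← ENNReal.ofReal_mul zero_le_two,
    ENNReal.ofReal_le_ofReal_iff (by have := sub_pos.mpr hs.2; positivity)] at key
  calc _ ≤ 4 * Λ * a * (d * μ.real (ball 0 1) * (δ ^ (1 - s) / (1 - s))) / 2 := by linarith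
    _ = _ := by ring

end Truncated

/-- Cancellation estimate for a parabola-like subgraph: if `P = {xⁿ < ψ(x')}` with
`ψ(0)=0`, `∇ψ(0)=0`, `‖D²ψ‖ ≤ a`, and `K` is symmetric (`K(z)=K(-z)`) with
`K(z) ≤ Λ|z|^{-(n+s)}` (`n = m+1` the ambient dimension), then the principal value
`∫_{B_δ} (χ_P - χ_{𝒞P}) K` is bounded in absolute value by `C a δ^{1-s}`,
with `C = C(n,s,Λ)`. -/
theorem subgraph_cancellation (m : ℕ) (s Λ : ℝ) (hs : s ∈ Set.Ioo (0:ℝ) 1) (hΛ : 0 < Λ) :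
    ∃ C : ℝ, 0 < C ∧
      ∀ (ψ : EuclideanSpace ℝ (Fin m) → ℝ) (a : ℝ), 0 < a →
        ContDiff ℝ 2 ψ → ψ 0 = 0 → gradient ψ 0 = 0 →
        (∀ x', ‖iteratedFDeriv ℝ 2 ψ x'‖ ≤ a) →
      ∀ K : EuclideanSpace ℝ (Fin m) × ℝ → ℝ,
        (∀ z, 0 ≤ K z) → (∀ z, K z = K (-z)) →
        (∀ z, K z ≤ Λ * (Real.sqrt (‖z.1‖ ^ 2 + z.2 ^ 2)) ^ (-(((m : ℝ) + 1) + s))) →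
      ∀ δ : ℝ, δ ∈ Set.Ioc (0:ℝ) 1 →
      ∀ I : ℝ,
        Tendsto (fun ε : ℝ =>
          ∫ x in {z : EuclideanSpace ℝ (Fin m) × ℝ |
              ε ≤ Real.sqrt (‖z.1‖ ^ 2 + z.2 ^ 2) ∧ Real.sqrt (‖z.1‖ ^ 2 + z.2 ^ 2) < δ},
            (({z : EuclideanSpace ℝ (Fin m) × ℝ | z.2 < ψ z.1}.indicator
                (fun _ => (1:ℝ)) x) -
             ({z : EuclideanSpace ℝ (Fin m) × ℝ | z.2 < ψ z.1}ᶜ.indicator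
                (fun _ => (1:ℝ)) x)) * K x)
          (nhdsWithin 0 (Set.Ioi 0)) (nhds I) →
        |I| ≤ C * a * δ ^ (1 - s) := by
  set c := 2 * Λ * (m * volume.real (ball (0 : EuclideanSpace ℝ (Fin m)) 1) / (1 - s))
  have hc : 0 ≤ c := by
    have := sub_pos.mpr hs.2
    positivity
  -- `c = 0` when `m = 0`
  refine ⟨c + 1, by positivity, ?_⟩
  intro ψ a ha hψ hψ0 hgrad hD2 K hK0 hKsym hKbd δ hδ I hI
  have hψa : ∀ y, |ψ y| ≤ a * ‖y‖ ^ 2 :=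
    norm_le_mul_norm_sq_of_norm_iteratedFDeriv_two_le hψ hψ0 (by simpa [gradient] using hgrad)
      hD2
  have htrunc : ∀ ε ∈ Ioi (0 : ℝ), |∫ x in {z : EuclideanSpace ℝ (Fin m) × ℝ |
      ε ≤ √(‖z.1‖ ^ 2 + z.2 ^ 2) ∧ √(‖z.1‖ ^ 2 + z.2 ^ 2) < δ},
        signIndicator (subgraph ψ) x * K x| ≤ c * a * δ ^ (1 - s) := fun ε hε => by
    rw [Measure.volume_eq_prod]
    exact abs_setIntegral_signIndicator_subgraph_mul_le volume finrank_euclideanSpace_fin hψa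
      hK0 hKsym hKbd hs hΛ.le ha.le hε hδ.1
  calc |I| ≤ c * a * δ ^ (1 - s) :=
        le_of_tendsto hI.abs (eventually_mem_nhdsWithin.mono htrunc)
    _ ≤ (c + 1) * a * δ ^ (1 - s) := mul_le_mul_of_nonneg_right
      (mul_le_mul_of_nonneg_right (le_add_of_nonneg_right zero_le_one) ha.le)
      (rpow_nonneg hδ.1.le _)
end
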